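/- arXiv:0906.0081 — 3 statements merged into one kernel-verified Lean document; each statement's English description precedes it below -/
import Mathlib

section
/- Let f(x,y) = x^5 + x^2y^2 + y^5 in ℂ[[x,y]], let u be the valuation given by u(x^{k_x}y^{k_y} monomials) via the linear form ℓ(k_x,k_y) = 2k_x + 3k_y (taking the minimum over the support), and let v be the induced order function on ℂ[[x,y]]/(f) defined by v(g) = sup over representatives g' of u(g'). Then v is not a valuation: v(x²) = 4 and v(x³+y²) = 6, but v(x²·(x³+y²)) = 15 ≠ 4 + 6. -/
/-!
The order function is computed with `weightedOrder` for the weights `(2, 3)`. Since `f` has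
weighted order `10`, adding a multiple of `f` cannot change the order of anything of smaller
order, which gives `v(x²) = 4` and `v(x³ + y²) = 6`. On the other hand `x²(x³ + y²) ≡ -y⁵`, so
`v(x²(x³ + y²)) ≥ 15`; conversely the coefficients of `x⁵` and of `y⁵` in any `c f` both equal
the constant term of `c`, so one of these two monomials survives in every `-y⁵ + c f`.
-/

open MvPowerSeries Finsupp

theorem Finsupp.weight_fin_two (a b : ℕ) (k : Fin 2 →₀ ℕ) :
    weight ![a, b] k = a * k 0 + b * k 1 := by
  simp [weight_apply, Finsupp.sum_fintype, Fin.sum_univ_two, mul_comm]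

namespace MvPowerSeries

variable {σ R : Type*}

theorem weightedOrder_eq_iInf [Semiring R] (w : σ → ℕ) (g : MvPowerSeries σ R) :
    g.weightedOrder w = ⨅ d : {d : σ →₀ ℕ // coeff d g ≠ 0}, (weight w d.1 : ℕ∞) :=
  le_antisymm (le_iInf fun d => weightedOrder_le w d.2)
    (le_weightedOrder w fun d hd => by_contra fun h =>
      (iInf_le (fun d : {d // coeff d g ≠ 0} => (weight w d.1 : ℕ∞)) ⟨d, h⟩).not_gt hd)

theorem weightedOrder_X_pow [Semiring R] [Nontrivial R] (w : σ → ℕ) (i : σ) (n : ℕ) :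
    (X i ^ n : MvPowerSeries σ R).weightedOrder w = n * w i := by
  rw [X_pow_eq, weightedOrder_monomial_of_ne_zero w one_ne_zero, weight_single, smul_eq_mul,
    Nat.cast_mul]

noncomputable def quotientWeightedOrder [CommRing R] (w : σ → ℕ) (I : Ideal (MvPowerSeries σ R))
    (g : MvPowerSeries σ R ⧸ I) : ℕ∞ :=
  ⨆ g' : {g' : MvPowerSeries σ R // Ideal.Quotient.mk I g' = g}, g'.1.weightedOrder w

section Quotient

variable [CommRing R] (w : σ → ℕ)

theorem weightedOrder_le_quotientWeightedOrder_mk (I : Ideal (MvPowerSeries σ R))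
    (g : MvPowerSeries σ R) :
    g.weightedOrder w ≤ quotientWeightedOrder w I (Ideal.Quotient.mk I g) :=
  le_iSup_of_le ⟨g, rfl⟩ le_rfl

theorem quotientWeightedOrder_mk_span_singleton_le {f g : MvPowerSeries σ R} {n : ℕ∞}
    (h : ∀ c, (g + c * f).weightedOrder w ≤ n) :
    quotientWeightedOrder w (Ideal.span {f}) (Ideal.Quotient.mk _ g) ≤ n := by
  refine iSup_le fun g' => ?_
  obtain ⟨c, hc⟩ := Ideal.mem_span_singleton'.mp (Ideal.Quotient.eq.mp g'.2)
  rw [eq_add_of_sub_eq' hc.symm]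
  exact h c

theorem quotientWeightedOrder_mk_span_singleton_of_lt {f g : MvPowerSeries σ R}
    (h : g.weightedOrder w < f.weightedOrder w) :
    quotientWeightedOrder w (Ideal.span {f}) (Ideal.Quotient.mk _ g) = g.weightedOrder w := by
  refine le_antisymm (quotientWeightedOrder_mk_span_singleton_le w fun c => ?_)
    (weightedOrder_le_quotientWeightedOrder_mk w _ g)
  have hcf : g.weightedOrder w < (c * f).weightedOrder w :=
    h.trans_le (le_add_self.trans (le_weightedOrder_mul w))
  rw [weightedOrder_add_of_weightedOrder_ne w hcf.ne, inf_of_le_left hcf.le]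

end Quotient

end MvPowerSeries

noncomputable def exampleCurve (R : Type*) [CommRing R] : MvPowerSeries (Fin 2) R :=
  X 0 ^ 5 + X 0 ^ 2 * X 1 ^ 2 + X 1 ^ 5

section ExampleCurve

variable {R : Type*} [CommRing R]

theorem ten_le_weightedOrder_exampleCurve [Nontrivial R] :
    10 ≤ (exampleCurve R).weightedOrder ![2, 3] := by
  refine le_trans (le_min (le_min ?_ ?_) ?_)
    ((min_le_min_right _ (min_weightedOrder_le_add _)).trans (min_weightedOrder_le_add _))
  · simp [weightedOrder_X_pow]; norm_num
  · refine le_trans ?_ (le_weightedOrder_mul _)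
    simp [weightedOrder_X_pow]; norm_num
  · simp [weightedOrder_X_pow]; norm_num

theorem coeff_single_five_mul_exampleCurve (c : MvPowerSeries (Fin 2) R) (i : Fin 2) :
    coeff (single i 5) (c * exampleCurve R) = constantCoeff c := by
  simp only [exampleCurve, X_pow_eq, monomial_mul_monomial, mul_one, mul_add, map_add,
    coeff_mul_monomial]
  fin_cases i <;> simp [Finsupp.le_def, Fin.forall_fin_two]

theorem weightedOrder_X_zero_sq [Nontrivial R] :
    (X 0 ^ 2 : MvPowerSeries (Fin 2) R).weightedOrder ![2, 3] = 4 := by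
  simp [weightedOrder_X_pow]; norm_num

theorem weightedOrder_X_zero_pow_three_add_X_one_sq [Nontrivial R] :
    (X 0 ^ 3 + X 1 ^ 2 : MvPowerSeries (Fin 2) R).weightedOrder ![2, 3] = 6 := by
  refine le_antisymm ?_ ((le_min ?_ ?_).trans (min_weightedOrder_le_add _))
  · refine (weightedOrder_le _ (d := single 1 2) ?_).trans ?_
    · simp [X_pow_eq, coeff_monomial, Finsupp.single_eq_single_iff]
    · norm_num [weight_single]
  · simp [weightedOrder_X_pow]; norm_num
  · simp [weightedOrder_X_pow]; norm_num

theorem weightedOrder_neg_X_one_pow_five_add_mul_exampleCurve_le [Nontrivial R]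
    (c : MvPowerSeries (Fin 2) R) :
    (-(X 1 ^ 5) + c * exampleCurve R).weightedOrder ![2, 3] ≤ 15 := by
  by_cases hc : constantCoeff c = 0
  · refine (weightedOrder_le _ (d := single 1 5) ?_).trans ?_
    · rw [map_add, coeff_single_five_mul_exampleCurve, hc, map_neg, X_pow_eq,
        coeff_monomial_same]
      simp
    · norm_num [weight_single]
  · refine (weightedOrder_le _ (d := single 0 5) ?_).trans ?_
    · rw [map_add, coeff_single_five_mul_exampleCurve, map_neg, X_pow_eq, coeff_monomial,
        if_neg (by simp [Finsupp.single_eq_single_iff])]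
      simpa using hc
    · norm_num [weight_single]

theorem quotientWeightedOrder_mk_exampleCurve_of_lt_ten [Nontrivial R]
    {g : MvPowerSeries (Fin 2) R} (h : g.weightedOrder ![2, 3] < 10) :
    quotientWeightedOrder ![2, 3] (Ideal.span {exampleCurve R}) (Ideal.Quotient.mk _ g) =
      g.weightedOrder ![2, 3] :=
  quotientWeightedOrder_mk_span_singleton_of_lt _ (h.trans_le ten_le_weightedOrder_exampleCurve)

theorem quotientWeightedOrder_X_zero_sq [Nontrivial R] :
    quotientWeightedOrder ![2, 3] (Ideal.span {exampleCurve R})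
      (Ideal.Quotient.mk _ (X 0 ^ 2)) = 4 := by
  have h := weightedOrder_X_zero_sq (R := R)
  rw [quotientWeightedOrder_mk_exampleCurve_of_lt_ten (by rw [h]; norm_num), h]

theorem quotientWeightedOrder_X_zero_pow_three_add_X_one_sq [Nontrivial R] :
    quotientWeightedOrder ![2, 3] (Ideal.span {exampleCurve R})
      (Ideal.Quotient.mk _ (X 0 ^ 3 + X 1 ^ 2)) = 6 := by
  have h := weightedOrder_X_zero_pow_three_add_X_one_sq (R := R)
  rw [quotientWeightedOrder_mk_exampleCurve_of_lt_ten (by rw [h]; norm_num), h]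

theorem quotientWeightedOrder_X_zero_sq_mul [Nontrivial R] :
    quotientWeightedOrder ![2, 3] (Ideal.span {exampleCurve R})
      (Ideal.Quotient.mk _ (X 0 ^ 2 * (X 0 ^ 3 + X 1 ^ 2))) = 15 := by
  have hrep : Ideal.Quotient.mk (Ideal.span {exampleCurve R}) (X 0 ^ 2 * (X 0 ^ 3 + X 1 ^ 2)) =
      Ideal.Quotient.mk _ (-(X 1 ^ 5)) :=
    Ideal.Quotient.eq.mpr (Ideal.mem_span_singleton'.mpr ⟨1, by rw [exampleCurve]; ring⟩)
  rw [hrep]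
  refine le_antisymm (quotientWeightedOrder_mk_span_singleton_le _
    weightedOrder_neg_X_one_pow_five_add_mul_exampleCurve_le) ?_
  calc (15 : ℕ∞) = (-(X 1 ^ 5) : MvPowerSeries (Fin 2) R).weightedOrder ![2, 3] := by
        rw [weightedOrder_neg, weightedOrder_X_pow]; norm_num
    _ ≤ _ := weightedOrder_le_quotientWeightedOrder_mk _ _ _

end ExampleCurve

/-- For `f = x⁵ + x²y² + y⁵`, the order function `v` induced on
`ℂ[[x,y]]/(f)` by the valuation `u` of the linear form `ℓ(k_x,k_y) = 2k_x + 3k_y`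
is not a valuation: `v(x²) = 4`, `v(x³+y²) = 6`, but `v(x²·(x³+y²)) = 15 ≠ 4 + 6`. -/
theorem newton_order_function_not_valuation :
    let f : MvPowerSeries (Fin 2) ℂ := X 0 ^ 5 + X 0 ^ 2 * X 1 ^ 2 + X 1 ^ 5
    let u : MvPowerSeries (Fin 2) ℂ → ℕ∞ := fun g =>
      ⨅ k : {k : Fin 2 →₀ ℕ // MvPowerSeries.coeff k g ≠ 0},
        ((2 * k.1 0 + 3 * k.1 1 : ℕ) : ℕ∞)
    let v : (MvPowerSeries (Fin 2) ℂ ⧸ Ideal.span {f}) → ℕ∞ := fun g =>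
      ⨆ g' : {g' : MvPowerSeries (Fin 2) ℂ // Ideal.Quotient.mk (Ideal.span {f}) g' = g},
        u g'.1
    let π := Ideal.Quotient.mk (Ideal.span {f})
    v (π (X 0 ^ 2)) = 4 ∧
    v (π (X 0 ^ 3 + X 1 ^ 2)) = 6 ∧
    v (π (X 0 ^ 2 * (X 0 ^ 3 + X 1 ^ 2))) = 15 ∧
    v (π (X 0 ^ 2 * (X 0 ^ 3 + X 1 ^ 2))) ≠ v (π (X 0 ^ 2)) + v (π (X 0 ^ 3 + X 1 ^ 2)) := by
  intro f u v π
  have hv : v = quotientWeightedOrder ![2, 3] (Ideal.span {exampleCurve ℂ}) := by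
    funext g
    simp only [v, u, quotientWeightedOrder, weightedOrder_eq_iInf, weight_fin_two]
    rfl
  have h4 : v (π (X 0 ^ 2)) = 4 := hv ▸ quotientWeightedOrder_X_zero_sq
  have h6 : v (π (X 0 ^ 3 + X 1 ^ 2)) = 6 :=
    hv ▸ quotientWeightedOrder_X_zero_pow_three_add_X_one_sq
  have h15 : v (π (X 0 ^ 2 * (X 0 ^ 3 + X 1 ^ 2))) = 15 :=
    hv ▸ quotientWeightedOrder_X_zero_sq_mul
  refine ⟨h4, h6, h15, ?_⟩
  rw [h4, h6, h15]
  norm_num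
end

section
/- Let {J(v)}_{v ∈ ℤ^s} be a decreasing multi-index filtration of a ℂ-vector space by subspaces (J(v') ⊆ J(v) whenever v' ≥ v componentwise), with all quotients J(v)/J(v+1) finite dimensional, where 1 = (1,…,1). Then the coefficient of t^v in L(t)·∏_{i=1}^s(t_i − 1)/(t_1⋯t_s − 1), where L(t) = Σ_v dim(J(v)/J(v+1)) t^v, equals Σ_{I ⊆ {1,…,s}} (−1)^{#I} dim( J(v + 1_I)/J(v+1) ), where 1_I ∈ {0,1}^s is the indicator vector of I. -/
/-!
Put `u = v - 1`. Reindexing by `I ↦ Iᶜ` turns `v - 1_I` into `u + 1_I`, so the right-hand side is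
`Σ_K (-1)^#K dim J(u+1_K)/J(u+1_K+1)`. Each quotient `J(u+1_K)/J(u+1_K+1)` is split along the
chains `J(u+1_K) ⊇ J(u+1) ⊇ J(u+1+1_K)` and `J(u+1) ⊇ J(u+1+1_K) ⊇ J(u+1+1)`: the pieces give
`A(u)`, `-A(u+1)` and a term independent of `K`, whose alternating sum vanishes.
-/

/-- The dimension of the "quotient" `W₁/W₂` of two subspaces (intended for `W₂ ⊆ W₁`). -/
noncomputable def relDim {V : Type*} [AddCommGroup V] [Module ℂ V]
    (W₁ W₂ : Submodule ℂ V) : ℕ :=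
  Module.finrank ℂ (↥W₁ ⧸ (W₂.comap W₁.subtype))

open Finset

section relDim

variable {V : Type*} [AddCommGroup V] [Module ℂ V]

lemma relDim_self (W : Submodule ℂ V) : relDim W W = 0 := by
  rw [relDim, Submodule.comap_subtype_self]
  exact Module.finrank_zero_of_subsingleton

/-- Third isomorphism theorem: inside `W₁ ⧸ W₃`, the image of `W₂` is `W₂ ⧸ W₃` and the
quotient by it is `W₁ ⧸ W₂`. -/
lemma relDim_add_relDim {W₁ W₂ W₃ : Submodule ℂ V} (h₃₂ : W₃ ≤ W₂) (h₂₁ : W₂ ≤ W₁)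
    [FiniteDimensional ℂ (↥W₁ ⧸ W₃.comap W₁.subtype)] :
    relDim W₁ W₂ + relDim W₂ W₃ = relDim W₁ W₃ := by
  set p₃ := W₃.comap W₁.subtype
  set p₂ := W₂.comap W₁.subtype
  set φ : ↥W₂ →ₗ[ℂ] ↥W₁ ⧸ p₃ := p₃.mkQ ∘ₗ Submodule.inclusion h₂₁
  have hker : LinearMap.ker φ = W₃.comap W₂.subtype := by
    ext x
    simp [φ, p₃, Submodule.Quotient.mk_eq_zero, Submodule.inclusion]
  have hrange : LinearMap.range φ = p₂.map p₃.mkQ := by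
    rw [LinearMap.range_comp, Submodule.range_inclusion]
  have e₁ := Submodule.quotientQuotientEquivQuotient p₃ p₂ (Submodule.comap_mono h₃₂)
  have e₂ := (LinearMap.quotKerEquivRange φ).trans (LinearEquiv.ofEq _ _ hrange)
  rw [hker] at e₂
  rw [relDim, relDim, relDim, ← e₁.finrank_eq, e₂.finrank_eq]
  exact Submodule.finrank_quotient_add_finrank _

end relDim

section Filtration

variable {s : ℕ} {V : Type*} [AddCommGroup V] [Module ℂ V] {J : (Fin s → ℤ) → Submodule ℂ V}

lemma relDim_shift_eq (hJ : Antitone J)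
    (hfin : ∀ v, FiniteDimensional ℂ (↥(J v) ⧸ ((J (v + 1)).comap (J v).subtype)))
    (u : Fin s → ℤ) {e : Fin s → ℤ} (he₀ : 0 ≤ e) (he₁ : e ≤ 1) :
    (relDim (J (u + e)) (J (u + e + 1)) : ℤ) =
      relDim (J (u + e)) (J (u + 1)) + relDim (J (u + 1)) (J (u + 1 + 1))
        - relDim (J (u + 1 + e)) (J (u + 1 + 1)) := by
  have hcomm : u + e + 1 = u + 1 + e := add_right_comm u e 1
  have h₁ : J (u + 1) ≤ J (u + e) := hJ (by gcongr)
  have h₂ : J (u + 1 + e) ≤ J (u + 1) := hJ (le_add_of_nonneg_right he₀)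
  have h₃ : J (u + 1 + 1) ≤ J (u + 1 + e) := hJ (by gcongr)
  have hfd₁ := hfin (u + e)
  have hfd₂ := hfin (u + 1)
  rw [hcomm] at hfd₁ ⊢
  rw [← relDim_add_relDim h₂ h₁, ← relDim_add_relDim h₃ h₂]
  push_cast
  ring

lemma sum_neg_one_pow_card_mul_relDim (u : Fin s → ℤ) :
    ∑ K : Finset (Fin s), (-1 : ℤ) ^ #K * relDim (J u) (J (u + 1)) = 0 := by
  rcases s.eq_zero_or_pos with rfl | hs
  · simp [Subsingleton.elim (u + 1) u, relDim_self]
  · rw [← sum_mul, ← powerset_univ,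
      sum_powerset_neg_one_pow_card_of_nonempty (univ_nonempty_iff.2 ⟨⟨0, hs⟩⟩), zero_mul]

lemma sum_neg_one_pow_card_mul_relDim_shift (hJ : Antitone J)
    (hfin : ∀ v, FiniteDimensional ℂ (↥(J v) ⧸ ((J (v + 1)).comap (J v).subtype)))
    (u : Fin s → ℤ) {e : Finset (Fin s) → Fin s → ℤ} (he₀ : ∀ K, 0 ≤ e K) (he₁ : ∀ K, e K ≤ 1) :
    ∑ K, (-1 : ℤ) ^ #K * relDim (J (u + e K)) (J (u + e K + 1)) =
      ∑ K, (-1 : ℤ) ^ #K * relDim (J (u + e K)) (J (u + 1))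
        - ∑ K, (-1 : ℤ) ^ #K * relDim (J (u + 1 + e K)) (J (u + 1 + 1)) := by
  simp only [relDim_shift_eq hJ hfin u (he₀ _) (he₁ _), mul_sub, mul_add, sum_sub_distrib,
    sum_add_distrib, sum_neg_one_pow_card_mul_relDim, add_zero]

end Filtration

/-- For a decreasing multi-index filtration `{J(v)}` with finite-dimensional
quotients `J(v)/J(v+1)`, the coefficient at `t^v` of
`L(t)·∏ᵢ(tᵢ−1)/(t₁⋯t_s−1)`, where `L(t) = Σ_v dim(J(v)/J(v+1)) t^v`, equals the
alternating sum `A(v) = Σ_{I⊆{1,…,s}} (−1)^{#I} dim(J(v+1_I)/J(v+1))`; as an identity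
of coefficients this says `A(v−1) − A(v)` (the `t^v`-coefficient of `A(t)·(t₁⋯t_s−1)`)
equals `Σ_I (−1)^{s−#I} L(v−1_I)` (the `t^v`-coefficient of `L(t)·∏ᵢ(tᵢ−1)`). -/
theorem poincare_series_coefficient_formula (s : ℕ) {V : Type*} [AddCommGroup V]
    [Module ℂ V] (J : (Fin s → ℤ) → Submodule ℂ V)
    (hdec : ∀ v v' : Fin s → ℤ, v ≤ v' → J v' ≤ J v)
    (hfin : ∀ v : Fin s → ℤ,
      FiniteDimensional ℂ (↥(J v) ⧸ ((J (v + 1)).comap (J v).subtype)))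
    (ind : Finset (Fin s) → (Fin s → ℤ))
    (hind : ∀ I i, ind I i = if i ∈ I then 1 else 0)
    (A L : (Fin s → ℤ) → ℤ)
    (hA : ∀ v, A v = ∑ I : Finset (Fin s),
      (-1 : ℤ) ^ I.card * relDim (J (v + ind I)) (J (v + 1)))
    (hL : ∀ v, L v = relDim (J v) (J (v + 1))) :
    ∀ v : Fin s → ℤ,
      A (v - 1) - A v =
        ∑ I : Finset (Fin s), (-1 : ℤ) ^ (s - I.card) * L (v - ind I) := by
  intro v
  have hind₀ : ∀ K, 0 ≤ ind K := fun K i => by rw [hind]; split_ifs <;> simp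
  have hind₁ : ∀ K, ind K ≤ 1 := fun K i => by rw [hind]; split_ifs <;> simp
  have hcompl : ∀ I, v - ind I = v - 1 + ind Iᶜ := fun I => by
    funext i
    simp only [Pi.sub_apply, Pi.add_apply, Pi.one_apply, hind, mem_compl]
    split_ifs <;> ring
  have hsplit := sum_neg_one_pow_card_mul_relDim_shift (fun _ _ h => hdec _ _ h) hfin (v - 1)
    hind₀ hind₁
  rw [sub_add_cancel] at hsplit
  rw [hA, hA, sub_add_cancel, ← hsplit]
  refine (Fintype.sum_equiv (compl_involutive.toPerm _) _ _ fun I => ?_).symm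
  rw [hcompl, hL, Function.Involutive.coe_toPerm, card_compl, Fintype.card_fin]
end

section
/- There exists a decreasing multi-index filtration {J(v)} of a ℂ-vector space with finite-dimensional quotients whose Poincaré series has a negative coefficient; explicitly, for a 17-dimensional space V with four subspaces W_0, W_1, W_2, W_3 given (in coordinates a_{500}, a_{410}, a_{320}, a_{230}, a_{140}, a_{050}, a_{401}, a_{302}, a_{203}, a_{104}, a_{041}, a_{032}, a_{023}, a_{014}, a_{211}, a_{121}, a_{112}) by W_0 = {a_{211}=a_{121}=a_{112}}, W_1 = {a_{050}=a_{041}=a_{032}=a_{023}=a_{014}=a_{121}=a_{112}=0}, W_2 = {a_{500}=a_{401}=a_{302}=a_{203}=a_{104}=a_{211}=a_{112}=0}, W_3 = {a_{500}=a_{410}=a_{320}=a_{230}=a_{140}=a_{050}=a_{211}=a_{121}=0}, the alternating sum Σ_{I ⊆ {0,1,2,3}} (−1)^{#I} dim(∩_{i∈I} W_i) equals −1. -/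
/-!
Each of `W₁, W₂, W₃` is a coordinate subspace, so each intersection of some of them is the
coordinate subspace cut out by the union of their zero sets. Each of them also kills at least
one of `a₂₁₁, a₁₂₁, a₁₁₂`, and on `W₀` these three are equal, so intersecting with `W₀` as
well kills all three. Hence every intersection other than `W₀` itself is a coordinate
subspace of dimension `17 - #(zero set)`, while `dim W₀ = 15`. What remains is a finite count.
-/

open Module LinearMap Finset

section CoordinateSubspaces

variable (K : Type*) {ι : Type*} [Field K]

def coordSubspace (S : Finset ι) : Submodule K (ι → K) :=
  ⨅ i ∈ S, ker (proj i : (ι → K) →ₗ[K] K)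

variable {K}

lemma mem_coordSubspace {S : Finset ι} {x : ι → K} :
    x ∈ coordSubspace K S ↔ ∀ i ∈ S, x i = 0 := by
  simp [coordSubspace]

lemma finrank_coordSubspace [Fintype ι] (S : Finset ι) :
    finrank K (coordSubspace K S) = Fintype.card ι - #S := by
  classical
  let restrict : (ι → K) →ₗ[K] (S → K) := LinearMap.pi fun i => proj (i : ι)
  have hker : ker restrict = coordSubspace K S := by
    ext x
    simp [restrict, mem_coordSubspace, funext_iff]
  have hsurj : Function.Surjective restrict := fun y =>
    ⟨fun j => if h : j ∈ S then y ⟨j, h⟩ else 0, by ext i; simp [restrict]⟩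
  have := finrank_range_add_finrank_ker restrict
  rw [range_eq_top.mpr hsurj, finrank_top, hker, finrank_fintype_fun_eq_card,
    finrank_fintype_fun_eq_card, Fintype.card_coe] at this
  omega

lemma iInf_coordSubspace {κ : Type*} [DecidableEq ι] (J : Finset κ) (S : κ → Finset ι) :
    ⨅ j ∈ J, coordSubspace K (S j) = coordSubspace K (J.biUnion S) :=
  (iInf_biUnion J S _).symm

lemma ker_sub_inf_ker_sub_inf_coordSubspace [DecidableEq ι] {a b c : ι} {S : Finset ι}
    (h : a ∈ S ∨ b ∈ S ∨ c ∈ S) :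
    ker ((proj a : (ι → K) →ₗ[K] K) - proj b) ⊓ ker ((proj b : (ι → K) →ₗ[K] K) - proj c) ⊓
      coordSubspace K S = coordSubspace K ({a, b, c} ∪ S) := by
  ext x
  simp only [Submodule.mem_inf, mem_ker, LinearMap.sub_apply, proj_apply, sub_eq_zero,
    mem_coordSubspace, mem_union, mem_insert, mem_singleton]
  grind

lemma finrank_ker_sub_inf_ker_sub [Fintype ι] {a b c : ι}
    (hab : a ≠ b) (hac : a ≠ c) (hbc : b ≠ c) :
    finrank K ↥(ker ((proj a : (ι → K) →ₗ[K] K) - proj b) ⊓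
      ker ((proj b : (ι → K) →ₗ[K] K) - proj c)) = Fintype.card ι - 2 := by
  classical
  let f := LinearMap.prod ((proj a : (ι → K) →ₗ[K] K) - proj b)
    ((proj b : (ι → K) →ₗ[K] K) - proj c)
  have hsurj : Function.Surjective f := fun y =>
    ⟨Pi.single a (y.1 + y.2) + Pi.single b y.2, by
      simp [f, hab, hab.symm, hac.symm, hbc.symm]⟩
  have := finrank_range_add_finrank_ker f
  rw [range_eq_top.mpr hsurj, finrank_top, ker_prod, finrank_prod, finrank_self,
    finrank_fintype_fun_eq_card] at this
  omega

end CoordinateSubspaces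

namespace NewtonFiltrationExample

/-- Index `0` holds `a₂₁₁, a₁₂₁, a₁₁₂`: the coordinates that vanish on `W₀ ∩ W_j` for every
`j ≠ 0`, although not on `W₀` itself. -/
def zeroCoords : Fin 4 → Finset (Fin 17) :=
  ![{14, 15, 16}, {5, 10, 11, 12, 13, 15, 16}, {0, 6, 7, 8, 9, 14, 16},
    {0, 1, 2, 3, 4, 5, 14, 15}]

variable {W : Fin 4 → Submodule ℂ (Fin 17 → ℂ)}

lemma iInf_eq_coordSubspace_of_zero_notMem
    (hW : ∀ j ≠ 0, W j = coordSubspace ℂ (zeroCoords j)) {I : Finset (Fin 4)} (hI : 0 ∉ I) :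
    ⨅ i ∈ I, W i = coordSubspace ℂ (I.biUnion zeroCoords) := by
  rw [← iInf_coordSubspace]
  exact biInf_congr fun i hi => hW i (ne_of_mem_of_not_mem hi hI)

lemma iInf_eq_coordSubspace
    (hW₀ : W 0 = ker ((proj 14 : (Fin 17 → ℂ) →ₗ[ℂ] ℂ) - proj 15) ⊓
      ker ((proj 15 : (Fin 17 → ℂ) →ₗ[ℂ] ℂ) - proj 16))
    (hW : ∀ j ≠ 0, W j = coordSubspace ℂ (zeroCoords j)) {I : Finset (Fin 4)} (hI : I ≠ {0}) :
    ⨅ i ∈ I, W i = coordSubspace ℂ (I.biUnion zeroCoords) := by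
  by_cases h₀ : 0 ∈ I
  case neg => exact iInf_eq_coordSubspace_of_zero_notMem hW h₀
  set J := I.erase 0
  obtain ⟨j, hj⟩ : J.Nonempty := by
    simp [J, nonempty_iff_ne_empty, erase_eq_empty_iff, hI, ne_empty_of_mem h₀]
  have hj₀ : j ≠ 0 := ne_of_mem_erase hj
  have hmeet : 14 ∈ J.biUnion zeroCoords ∨ 15 ∈ J.biUnion zeroCoords ∨
      16 ∈ J.biUnion zeroCoords := by
    have hsub := subset_biUnion_of_mem zeroCoords hj
    have hzero : ∀ j ≠ 0, 14 ∈ zeroCoords j ∨ 15 ∈ zeroCoords j ∨ 16 ∈ zeroCoords j := by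
      decide
    rcases hzero j hj₀ with h | h | h <;> simp [hsub h]
  rw [← insert_erase h₀, Finset.iInf_insert, hW₀,
    iInf_eq_coordSubspace_of_zero_notMem hW (notMem_erase 0 I),
    ker_sub_inf_ker_sub_inf_coordSubspace hmeet, biUnion_insert]
  rfl

lemma finrank_iInf
    (hW₀ : W 0 = ker ((proj 14 : (Fin 17 → ℂ) →ₗ[ℂ] ℂ) - proj 15) ⊓
      ker ((proj 15 : (Fin 17 → ℂ) →ₗ[ℂ] ℂ) - proj 16))
    (hW : ∀ j ≠ 0, W j = coordSubspace ℂ (zeroCoords j)) (I : Finset (Fin 4)) :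
    finrank ℂ ↥(⨅ i ∈ I, W i) = if I = {0} then 15 else 17 - #(I.biUnion zeroCoords) := by
  split_ifs with hI
  · rw [hI, Finset.iInf_singleton, hW₀, finrank_ker_sub_inf_ker_sub] <;> decide
  · rw [iInf_eq_coordSubspace hW₀ hW hI, finrank_coordSubspace, Fintype.card_fin]

end NewtonFiltrationExample

/-- In the 17-dimensional space with coordinates
`a₅₀₀,a₄₁₀,a₃₂₀,a₂₃₀,a₁₄₀,a₀₅₀,a₄₀₁,a₃₀₂,a₂₀₃,a₁₀₄,a₀₄₁,a₀₃₂,a₀₂₃,a₀₁₄,a₂₁₁,a₁₂₁,a₁₁₂`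
(indexed here by `0,…,16` in this order), for the four subspaces
`W₀ = {a₂₁₁ = a₁₂₁ = a₁₁₂}`,
`W₁ = {a₀₅₀ = a₀₄₁ = a₀₃₂ = a₀₂₃ = a₀₁₄ = a₁₂₁ = a₁₁₂ = 0}`,
`W₂ = {a₅₀₀ = a₄₀₁ = a₃₀₂ = a₂₀₃ = a₁₀₄ = a₂₁₁ = a₁₁₂ = 0}`,
`W₃ = {a₅₀₀ = a₄₁₀ = a₃₂₀ = a₂₃₀ = a₁₄₀ = a₀₅₀ = a₂₁₁ = a₁₂₁ = 0}`,
the alternating sum `Σ_{I ⊆ {0,1,2,3}} (−1)^{#I} dim(∩_{i∈I} W_i)` equals `−1`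
(so a Poincaré series of a filtration can have a negative coefficient). -/
theorem alternating_sum_of_dims_eq_neg_one :
    let pr : Fin 17 → ((Fin 17 → ℂ) →ₗ[ℂ] ℂ) := fun i => LinearMap.proj i
    let W : Fin 4 → Submodule ℂ (Fin 17 → ℂ) :=
      ![LinearMap.ker (pr 14 - pr 15) ⊓ LinearMap.ker (pr 15 - pr 16),
        ⨅ i ∈ ({5, 10, 11, 12, 13, 15, 16} : Finset (Fin 17)), LinearMap.ker (pr i),
        ⨅ i ∈ ({0, 6, 7, 8, 9, 14, 16} : Finset (Fin 17)), LinearMap.ker (pr i),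
        ⨅ i ∈ ({0, 1, 2, 3, 4, 5, 14, 15} : Finset (Fin 17)), LinearMap.ker (pr i)]
    ∑ I : Finset (Fin 4),
      (-1 : ℤ) ^ I.card * (Module.finrank ℂ ↥(⨅ i ∈ I, W i) : ℤ) = -1 := by
  intro pr W
  have hW : ∀ j ≠ 0, W j = coordSubspace ℂ (NewtonFiltrationExample.zeroCoords j) := by
    intro j hj
    fin_cases j
    exacts [absurd rfl hj, rfl, rfl, rfl]
  simp only [NewtonFiltrationExample.finrank_iInf rfl hW]
  decide
end
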